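/- arXiv:1411.1096 — 4 statements merged into one kernel-verified Lean document; each statement's English description precedes it below -/
import Mathlib

section
/- Assume A is a special extension of E (finite symmetric integral relation algebras) and B is the subalgebra of C_E(A) generated by the atoms of C_E(A). Then every finitely generated subalgebra of B is finite, and every element of B differs from an element of the canonical copy E' of E inside C_E(A) (via a ↦ J(a,0)) by a join of finitely many atoms. -/
universe u v

/-- Non-associative relation algebras: Boolean algebras with a binary
relative multiplication `comp`, unary converse `conv`, and identity `ide`. -/
class NA (α : Type u) extends BooleanAlgebra α where
  comp : α → α → α
  conv : α → α
  ide : α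
  comp_ide : ∀ x : α, comp x ide = x
  ide_comp : ∀ x : α, comp ide x = x
  conv_conv : ∀ x : α, conv (conv x) = x
  conv_sup : ∀ x y : α, conv (x ⊔ y) = conv x ⊔ conv y
  comp_sup : ∀ x y z : α, comp x (y ⊔ z) = comp x y ⊔ comp x z
  sup_comp : ∀ x y z : α, comp (x ⊔ y) z = comp x z ⊔ comp y z
  peirce1 : ∀ x y z : α, comp x y ⊓ z = ⊥ ↔ comp (conv x) z ⊓ y = ⊥
  peirce2 : ∀ x y z : α, comp x y ⊓ z = ⊥ ↔ comp z (conv y) ⊓ x = ⊥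

/-- Relation algebras: associative non-associative relation algebras. -/
class RA (α : Type u) extends NA α where
  comp_assoc : ∀ x y z : α, comp (comp x y) z = comp x (comp y z)

namespace NA

variable {α : Type u} [NA α]

/-- The diversity element 0'. -/
def div : α := (ide : α)ᶜ

/-- Converse is the identity. -/
def Symmetric (α : Type u) [NA α] : Prop := ∀ x : α, conv x = x

/-- The identity 1' is an atom. -/
def Integral (α : Type u) [NA α] : Prop := IsAtom (ide : α)

/-- A diversity atom: an atom below 0'. -/
def DivAtom (x : α) : Prop := IsAtom x ∧ x ≤ (div : α)

/-- A subalgebra of a (non-associative) relation algebra. -/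
structure Subalgebra (α : Type u) [NA α] where
  carrier : Set α
  bot_mem : ⊥ ∈ carrier
  top_mem : ⊤ ∈ carrier
  ide_mem : ide ∈ carrier
  compl_mem : ∀ x ∈ carrier, xᶜ ∈ carrier
  sup_mem : ∀ x ∈ carrier, ∀ y ∈ carrier, x ⊔ y ∈ carrier
  comp_mem : ∀ x ∈ carrier, ∀ y ∈ carrier, comp x y ∈ carrier
  conv_mem : ∀ x ∈ carrier, conv x ∈ carrier

/-- An atom of a subalgebra: a minimal nonzero element of the subalgebra. -/
def Subalgebra.AtomOf (E : Subalgebra α) (a : α) : Prop :=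
  a ∈ E.carrier ∧ a ≠ ⊥ ∧ ∀ b ∈ E.carrier, b ≤ a → b = ⊥ ∨ b = a

/-- A diversity atom of a subalgebra. -/
def Subalgebra.DivAtomOf (E : Subalgebra α) (a : α) : Prop :=
  E.AtomOf a ∧ a ≤ (div : α)

/-- `α` is (a copy of) the algebra E^{23}_q with atoms `e 0 = 1', e 1, …, e (q-1)`:
symmetric, integral, distinct diversity atoms multiply to 0', and
`e i ; e i = (e i)ᶜ` for diversity atoms. -/
def IsE23 (q : ℕ) (e : Fin q → α) : Prop :=
  Symmetric α ∧ Integral α ∧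
  Function.Injective e ∧ (∀ i : Fin q, (i : ℕ) = 0 → e i = ide) ∧
  (∀ i, IsAtom (e i)) ∧
  (∀ x : α, IsAtom x → ∃ i, x = e i) ∧
  (∀ i j : Fin q, (i : ℕ) ≠ 0 → (j : ℕ) ≠ 0 → i ≠ j →
    comp (e i) (e j) = (div : α)) ∧
  (∀ i : Fin q, (i : ℕ) ≠ 0 → comp (e i) (e i) = (e i)ᶜ)

/-- The subalgebra `Q` of `α` is a copy of E^{23}_q with atoms `e i`. -/
def IsE23Sub (Q : Subalgebra α) (q : ℕ) (e : Fin q → α) : Prop :=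
  Function.Injective e ∧ (∀ i : Fin q, (i : ℕ) = 0 → e i = ide) ∧
  (∀ i, Q.AtomOf (e i)) ∧
  (∀ x : α, Q.AtomOf x → ∃ i, x = e i) ∧
  (∀ i j : Fin q, (i : ℕ) ≠ 0 → (j : ℕ) ≠ 0 → i ≠ j →
    comp (e i) (e j) = (div : α)) ∧
  (∀ i : Fin q, (i : ℕ) ≠ 0 → comp (e i) (e i) = (e i)ᶜ)

/-- `cov` is a cover map for the subalgebra `E`: it sends each atom of the
ambient algebra to the atom of `E` containing it. -/
def CoverMap (E : Subalgebra α) (cov : α → α) : Prop :=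
  ∀ x : α, IsAtom x → E.AtomOf (cov x) ∧ x ≤ cov x

/-- The ambient atomic algebra is obtained from the subalgebra `B` by
splitting, with cover map `cov`. -/
def Splitting (B : Subalgebra α) (cov : α → α) : Prop :=
  CoverMap B cov ∧
  (∀ x y : α, DivAtom x → DivAtom y →
    (x = conv y → comp x y = comp (cov x) (cov y)) ∧
    (x ≠ conv y → comp x y = comp (cov x) (cov y) ⊓ (div : α)))

/-- The ambient algebra is a special extension of its subalgebra `E`. -/
def SpecialExt (E : Subalgebra α) : Prop :=
  (∀ a b c : α, E.DivAtomOf a → E.DivAtomOf b → E.DivAtomOf c →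
    ¬(a = b ∧ b = c) → c ≤ comp a b →
    ∀ x y : α, IsAtom x → IsAtom y → x ≤ a → y ≤ b → c ≤ comp x y) ∧
  (∀ a : α, E.DivAtomOf a → a ≤ comp a a →
    ∀ x y : α, IsAtom x → IsAtom y → x ≤ a → y ≤ a → comp x y ⊓ a ≠ ⊥)

/-- A flexible atom. -/
def Flexible (a : α) : Prop :=
  DivAtom a ∧ comp a a = ⊤ ∧
  ∀ x : α, DivAtom x → x ≠ a → comp x a = (div : α)

/-- A flexible atom of a subalgebra. -/
def FlexibleOf (E : Subalgebra α) (a : α) : Prop :=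
  E.DivAtomOf a ∧ comp a a = ⊤ ∧
  ∀ x : α, E.DivAtomOf x → x ≠ a → comp x a = (div : α)

/-- A flexible trio of diversity atoms. -/
def FlexTrio (a b c : α) : Prop :=
  DivAtom a ∧ DivAtom b ∧ DivAtom c ∧ a ≠ b ∧ a ≠ c ∧ b ≠ c ∧
  comp a a = ⊤ ∧ comp b b = ⊤ ∧ comp c c = ⊤ ∧
  comp a b = (div : α) ∧ comp a c = (div : α) ∧ comp b c = (div : α) ∧
  ∀ x : α, IsAtom x → x ∉ ({(ide : α), a, b, c} : Set α) →
    (comp x a = (div : α) ∧ comp x b = (div : α)) ∨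
    (comp x a = (div : α) ∧ comp x c = (div : α)) ∨
    (comp x b = (div : α) ∧ comp x c = (div : α))

/-- A flexible trio of diversity atoms of a subalgebra. -/
def FlexTrioOf (E : Subalgebra α) (a b c : α) : Prop :=
  E.DivAtomOf a ∧ E.DivAtomOf b ∧ E.DivAtomOf c ∧ a ≠ b ∧ a ≠ c ∧ b ≠ c ∧
  comp a a = ⊤ ∧ comp b b = ⊤ ∧ comp c c = ⊤ ∧
  comp a b = (div : α) ∧ comp a c = (div : α) ∧ comp b c = (div : α) ∧
  ∀ d : α, E.DivAtomOf d → d ∉ ({a, b, c} : Set α) →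
    (comp d a = (div : α) ∧ comp d b = (div : α)) ∨
    (comp d a = (div : α) ∧ comp d c = (div : α)) ∨
    (comp d b = (div : α) ∧ comp d c = (div : α))

/-- Basic k-by-k matrices of atoms. -/
def BasicMatrix (k : ℕ) (μ : Fin k → Fin k → α) : Prop :=
  (∀ i j, IsAtom (μ i j)) ∧ (∀ i, μ i i ≤ (ide : α)) ∧
  (∀ i j, conv (μ i j) = μ j i) ∧
  (∀ i j l, μ i j ≤ comp (μ i l) (μ l j))

/-- The identity condition for a basic matrix. -/
def IdCond (k : ℕ) (μ : Fin k → Fin k → α) : Prop :=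
  ∀ i j, μ i j = (ide : α) ↔ i = j

/-- The 1-point extension property. -/
def OnePointExt (α : Type u) [NA α] : Prop :=
  ∀ (k : ℕ) (μ : Fin k → Fin k → α), BasicMatrix k μ → IdCond k μ →
  ∀ x y : α, DivAtom x → DivAtom y → ∀ i j : Fin k, i ≠ j → μ i j ≤ comp x y →
  ∃ μ' : Fin (k + 1) → Fin (k + 1) → α, BasicMatrix (k + 1) μ' ∧ IdCond (k + 1) μ' ∧
    (∀ l m : Fin k, μ' l.castSucc m.castSucc = μ l m) ∧
    μ' i.castSucc (Fin.last k) = x ∧ μ' (Fin.last k) j.castSucc = y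

/-- A representation of `α` over a base set `X`. -/
structure Representation (α : Type u) [NA α] (X : Type v) where
  toFun : α → Set (X × X)
  inj : Function.Injective toFun
  map_sup : ∀ a b : α, toFun (a ⊔ b) = toFun a ∪ toFun b
  map_compl : ∀ a : α, toFun aᶜ = toFun ⊤ \ toFun a
  map_comp : ∀ a b : α,
    toFun (comp a b) = {p | ∃ z, (p.1, z) ∈ toFun a ∧ (z, p.2) ∈ toFun b}
  map_conv : ∀ a : α, toFun (conv a) = {p | (p.2, p.1) ∈ toFun a}
  map_ide : toFun ide = {p | p ∈ toFun ⊤ ∧ p.1 = p.2}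

/-- A complete representation: preserves all existing joins. -/
def Representation.IsComplete {α : Type u} [NA α] {X : Type v}
    (r : Representation α X) : Prop :=
  ∀ (S : Set α) (s : α), IsLUB S s → r.toFun s = ⋃ a ∈ S, r.toFun a

/-- Representability. -/
def Representable (α : Type u) [NA α] : Prop :=
  ∃ X : Type u, Nonempty (Representation α X)

/-- A representation of a subalgebra `E` over a base set `X`. -/
structure SubRepresentation (E : Subalgebra α) (X : Type v) where
  toFun : α → Set (X × X)
  inj : ∀ x ∈ E.carrier, ∀ y ∈ E.carrier, toFun x = toFun y → x = y
  map_sup : ∀ x ∈ E.carrier, ∀ y ∈ E.carrier, toFun (x ⊔ y) = toFun x ∪ toFun y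
  map_compl : ∀ x ∈ E.carrier, toFun xᶜ = toFun ⊤ \ toFun x
  map_comp : ∀ x ∈ E.carrier, ∀ y ∈ E.carrier,
    toFun (comp x y) = {p | ∃ z, (p.1, z) ∈ toFun x ∧ (z, p.2) ∈ toFun y}
  map_conv : ∀ x ∈ E.carrier, toFun (conv x) = {p | (p.2, p.1) ∈ toFun x}
  map_ide : toFun ide = {p | p ∈ toFun ⊤ ∧ p.1 = p.2}

/-- A homomorphism of (non-associative) relation algebras. -/
structure Hom (α : Type u) (β : Type v) [NA α] [NA β] where
  toFun : α → β
  map_sup : ∀ a b : α, toFun (a ⊔ b) = toFun a ⊔ toFun b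
  map_compl : ∀ a : α, toFun aᶜ = (toFun a)ᶜ
  map_comp : ∀ a b : α, toFun (comp a b) = comp (toFun a) (toFun b)
  map_conv : ∀ a : α, toFun (conv a) = conv (toFun a)
  map_ide : toFun ide = ide

/-- The thinning relation T(i,j,k) ⟺ (i ≤ j = k) ∨ (j ≤ k = i) ∨ (k ≤ i = j). -/
def T3 (i j k : ℕ) : Prop :=
  (i ≤ j ∧ j = k) ∨ (j ≤ k ∧ k = i) ∨ (k ≤ i ∧ i = j)

/-- The type of diversity atoms of `α`. -/
abbrev DAt (α : Type u) [NA α] : Type u := {x : α // DivAtom x}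

/-- Atoms of the algebra C_E(A): the identity atom `none` together with
copies `some (x, i)` of each diversity atom `x` of `A`, for `i ∈ ω`. -/
abbrev CAtom (α : Type u) [NA α] : Type u := Option (DAt α × ℕ)

/-- The cycle relation of the atom structure of C_E(A), relative to the cover
map `cov` of the subalgebra E. -/
def Cyc (cov : α → α) : CAtom α → CAtom α → CAtom α → Prop
  | none, none, none => True
  | none, some p, some q => p = q
  | some p, none, some q => p = q
  | some p, some q, none => p = q
  | some p, some q, some r =>
      r.1.1 ≤ comp p.1.1 q.1.1 ∧
      (cov p.1.1 = cov q.1.1 ∧ cov q.1.1 = cov r.1.1 → T3 p.2 q.2 r.2)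
  | _, _, _ => False

/-- Relative multiplication in the complex algebra C_E(A). -/
def Ccomp (cov : α → α) (X Y : Set (CAtom α)) : Set (CAtom α) :=
  {w | ∃ u ∈ X, ∃ v ∈ Y, Cyc cov u v w}

/-- The element J(a, n) of C_E(A). -/
def Jel (a : α) (n : ℕ) : Set (CAtom α) :=
  {w | (∃ p : DAt α × ℕ, w = some p ∧ p.1.1 ≤ a ∧ n ≤ p.2) ∨
       (w = none ∧ (ide : α) ≤ a)}

/-- The atom set B_n of the finite subalgebra of C_E(A). -/
def Bset (E : Subalgebra α) (n : ℕ) : Set (Set (CAtom α)) :=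
  {s | s = ({none} : Set (CAtom α))} ∪
  {s | ∃ (x : DAt α) (i : ℕ), i < n ∧ s = {some (x, i)}} ∪
  {s | ∃ a : α, E.DivAtomOf a ∧ s = Jel a n}

/-- Subalgebra of C_E(A) generated by a set `G` of elements. -/
inductive GenFrom (cov : α → α) (G : Set (Set (CAtom α))) : Set (CAtom α) → Prop
  | base {s : Set (CAtom α)} : s ∈ G → GenFrom cov G s
  | bot : GenFrom cov G ∅
  | idel : GenFrom cov G ({none} : Set (CAtom α))
  | compl {s : Set (CAtom α)} : GenFrom cov G s → GenFrom cov G sᶜ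
  | sup {s t : Set (CAtom α)} : GenFrom cov G s → GenFrom cov G t →
      GenFrom cov G (s ∪ t)
  | cmp {s t : Set (CAtom α)} : GenFrom cov G s → GenFrom cov G t →
      GenFrom cov G (Ccomp cov s t)

/-- Membership in the subalgebra B of C_E(A) generated by the atoms. -/
def Gen (cov : α → α) : Set (CAtom α) → Prop :=
  GenFrom cov {s | ∃ w : CAtom α, s = {w}}

end NA

/-!
Say that `s ⊆ CAtom α` agrees above level `m` if, from level `m` on, it coincides with `Jel c m`
for some `c ∈ E`. Such sets are the joins of the finitely many elements of `Bset E m`, so there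
are finitely many of them, and each differs from `Jel c 0` only below level `m`. They are closed
under the Boolean operations and, since composition distributes over joins, under composition
as soon as products of two elements of `Bset E m` are. For those, the special extension
conditions lift every cycle of `E` to atoms of `α` placed at any common high level, where the
thinning condition holds; only for two atoms of level below `m` does it fail, and it then removes
exactly the cycles inside one atom of `E`. Each atom of C_E(A) lies in `Bset E m` for large `m`,
so each element of B agrees above some level, and finitely many generators above a common one.
-/

theorem IsAtom.le_compl_iff {β : Type*} [HeytingAlgebra β] {z : β} (hz : IsAtom z) {w : β} :
    z ≤ wᶜ ↔ ¬z ≤ w := by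
  rw [le_compl_iff_disjoint_right, hz.not_le_iff_disjoint]

theorem IsAtom.le_sup_iff {β : Type*} [DistribLattice β] [OrderBot β] {z : β} (hz : IsAtom z)
    {c d : β} : z ≤ c ⊔ d ↔ z ≤ c ∨ z ≤ d := by
  rw [← not_iff_not, not_or, hz.not_le_iff_disjoint, hz.not_le_iff_disjoint,
    hz.not_le_iff_disjoint, disjoint_sup_right]

namespace NA

variable {α : Type*} [NA α] {E : Subalgebra α} {cov : α → α}

theorem comp_mono {x x' y y' : α} (hx : x ≤ x') (hy : y ≤ y') : comp x y ≤ comp x' y' :=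
  calc comp x y ≤ comp x' y := by rw [← sup_eq_right.mpr hx, sup_comp]; exact le_sup_left
    _ ≤ comp x' y' := by rw [← sup_eq_right.mpr hy, comp_sup]; exact le_sup_left

theorem comp_bot (x : α) : comp x ⊥ = ⊥ := by
  simpa using (peirce1 x ⊥ (comp x ⊥)).mpr (by simp)

theorem not_ide_le_of_le_div {b : α} (hb : b ≠ ⊥) (hbd : b ≤ div) : ¬ ide ≤ b := by
  intro h
  have hide : (ide : α) = ⊥ := le_compl_self.mp (h.trans hbd)
  exact hb (by rw [← comp_ide b, hide, comp_bot])

theorem comp_comm (hsym : Symmetric α) (x y : α) : comp x y = comp y x := by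
  have key : ∀ z : α, comp x y ⊓ z = ⊥ ↔ comp y x ⊓ z = ⊥ := fun z => by
    have h₁ := peirce1 x y z
    have h₂ := peirce2 x z y
    have h₃ := peirce1 y x z
    rw [hsym x] at h₁
    rw [hsym z] at h₂
    rw [hsym y] at h₃
    exact h₁.trans (h₂.trans h₃.symm)
  refine le_antisymm ?_ ?_
  · rw [← disjoint_compl_right_iff, disjoint_iff, key, inf_compl_eq_bot]
  · rw [← disjoint_compl_right_iff, disjoint_iff, ← key, inf_compl_eq_bot]

theorem le_comp_rotate (hsym : Symmetric α) {x y z : α} (hy : IsAtom y) (hz : IsAtom z) :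
    z ≤ comp x y ↔ y ≤ comp x z := by
  rw [← hz.not_disjoint_iff_le, ← hy.not_disjoint_iff_le, disjoint_comm, disjoint_iff,
    disjoint_comm, disjoint_iff, peirce1, hsym x]

theorem Subalgebra.inf_mem (E : Subalgebra α) {x y : α} (hx : x ∈ E.carrier)
    (hy : y ∈ E.carrier) : x ⊓ y ∈ E.carrier := by
  simpa using E.compl_mem _ (E.sup_mem _ (E.compl_mem _ hx) _ (E.compl_mem _ hy))

theorem Subalgebra.AtomOf.le_of_inf_ne_bot {a w : α} (ha : E.AtomOf a)
    (hw : w ∈ E.carrier) (h : a ⊓ w ≠ ⊥) : a ≤ w := by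
  rcases ha.2.2 _ (E.inf_mem ha.1 hw) inf_le_left with h' | h'
  · exact absurd h' h
  · exact h' ▸ inf_le_right

theorem CoverMap.le_cov (hcov : CoverMap E cov) {z : α} (hz : IsAtom z) : z ≤ cov z :=
  (hcov z hz).2

theorem CoverMap.cov_mem (hcov : CoverMap E cov) {z : α} (hz : IsAtom z) :
    cov z ∈ E.carrier :=
  (hcov z hz).1.1

theorem CoverMap.cov_le_iff (hcov : CoverMap E cov) {z c : α} (hz : IsAtom z)
    (hc : c ∈ E.carrier) : cov z ≤ c ↔ z ≤ c := by
  refine ⟨(hcov.le_cov hz).trans, fun h => (hcov z hz).1.le_of_inf_ne_bot hc ?_⟩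
  intro hbot
  exact hz.1 (le_bot_iff.mp (hbot ▸ le_inf (hcov.le_cov hz) h))

theorem CoverMap.cov_eq (hcov : CoverMap E cov) {z a : α} (hz : IsAtom z)
    (ha : E.AtomOf a) (h : z ≤ a) : cov z = a := by
  refine le_antisymm ((hcov.cov_le_iff hz ha.1).mpr h) ?_
  refine ha.le_of_inf_ne_bot (hcov.cov_mem hz) fun hbot => hz.1 (le_bot_iff.mp ?_)
  exact hbot ▸ le_inf h (hcov.le_cov hz)

theorem CoverMap.le_iff_cov_eq (hcov : CoverMap E cov) {z a : α} (hz : IsAtom z)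
    (ha : E.AtomOf a) : z ≤ a ↔ cov z = a :=
  ⟨hcov.cov_eq hz ha, fun h => h ▸ hcov.le_cov hz⟩

theorem CoverMap.divAtomOf_cov (hcov : CoverMap E cov) {z : α} (hz : DivAtom z) :
    E.DivAtomOf (cov z) := by
  refine ⟨(hcov z hz.1).1, le_compl_iff_disjoint_right.mpr (disjoint_iff.mpr ?_)⟩
  rcases (hcov z hz.1).1.2.2 _ (E.inf_mem (hcov.cov_mem hz.1) E.ide_mem) inf_le_left with h | h
  · exact h
  · have : z ≤ ide ⊓ div := le_inf ((hcov.le_cov hz.1).trans (h ▸ inf_le_right)) hz.2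
    rw [div, inf_compl_eq_bot] at this
    exact absurd (le_bot_iff.mp this) hz.1.1

theorem CoverMap.cov_le_comp_of_le_comp (hcov : CoverMap E cov) {x y z : α} (hx : IsAtom x)
    (hy : IsAtom y) (hz : IsAtom z) (h : z ≤ comp x y) : cov z ≤ comp (cov x) (cov y) :=
  (hcov.cov_le_iff hz (E.comp_mem _ (hcov.cov_mem hx) _ (hcov.cov_mem hy))).mpr
    (h.trans (comp_mono (hcov.le_cov hx) (hcov.le_cov hy)))

theorem SpecialExt.le_comp (hcov : CoverMap E cov) (hspec : SpecialExt E) {x y z : α}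
    (hx : DivAtom x) (hy : DivAtom y) (hz : DivAtom z)
    (hne : ¬(cov x = cov y ∧ cov y = cov z)) (h : cov z ≤ comp (cov x) (cov y)) :
    z ≤ comp x y :=
  (hcov.le_cov hz.1).trans <| hspec.1 _ _ _ (hcov.divAtomOf_cov hx) (hcov.divAtomOf_cov hy)
    (hcov.divAtomOf_cov hz) hne h x y hx.1 hy.1 (hcov.le_cov hx.1) (hcov.le_cov hy.1)

theorem SpecialExt.exists_le_comp [Finite α] (hsym : Symmetric α) (hcov : CoverMap E cov)
    (hspec : SpecialExt E) {x z b : α} (hx : DivAtom x) (hz : DivAtom z)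
    (hb : E.DivAtomOf b) (h : cov z ≤ comp (cov x) b) :
    ∃ y, DivAtom y ∧ y ≤ b ∧ z ≤ comp x y := by
  have : IsAtomic α := Finite.to_isAtomic
  by_cases hcases : cov x = b ∧ b = cov z
  · obtain ⟨hxb, hbz⟩ := hcases
    have hbb : b ≤ comp b b := by rwa [← hbz, hxb] at h
    have hzb : z ≤ b := hbz ▸ hcov.le_cov hz.1
    obtain ⟨y, hy, hyle⟩ := (eq_bot_or_exists_atom_le _).resolve_left
      (hspec.2 b hb hbb x z hx.1 hz.1 (hxb ▸ hcov.le_cov hx.1) hzb)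
    have hyb : y ≤ b := hyle.trans inf_le_right
    exact ⟨y, ⟨hy, hyb.trans hb.2⟩, hyb,
      (le_comp_rotate hsym hy hz.1).mpr (hyle.trans inf_le_left)⟩
  · obtain ⟨y, hy, hyb⟩ := (eq_bot_or_exists_atom_le b).resolve_left hb.1.2.1
    have hy' : DivAtom y := ⟨hy, hyb.trans hb.2⟩
    have hcy : cov y = b := hcov.cov_eq hy hb.1 hyb
    exact ⟨y, hy', hyb, hspec.le_comp hcov hx hy' hz (hcy ▸ hcases) (hcy ▸ h)⟩

-- `T3 i j k` says that the largest of `i, j, k` occurs at least twice.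
theorem T3_comm {i j k : ℕ} : T3 i j k ↔ T3 j i k := by
  unfold T3; omega

theorem le_max_of_T3 {i j k : ℕ} (h : T3 i j k) : k ≤ max i j := by
  unfold T3 at h; omega

theorem T3_of_le {i k : ℕ} (h : i ≤ k) : T3 i k k :=
  Or.inl ⟨h, rfl⟩

theorem cyc_none_left {v w : CAtom α} : Cyc cov none v w ↔ w = v := by
  rcases v with _ | p <;> rcases w with _ | q <;> simp [Cyc, eq_comm]

theorem cyc_none_mid {u w : CAtom α} : Cyc cov u none w ↔ w = u := by
  rcases u with _ | p <;> rcases w with _ | q <;> simp [Cyc, eq_comm]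

theorem cyc_comm (hsym : Symmetric α) {u v w : CAtom α} : Cyc cov u v w ↔ Cyc cov v u w := by
  rcases u with _ | p <;> rcases v with _ | q <;> rcases w with _ | r <;>
    simp only [Cyc, eq_comm]
  rw [comp_comm hsym, T3_comm]
  exact and_congr_right fun _ => imp_congr_left
    ⟨fun ⟨h₁, h₂⟩ => ⟨h₁, h₁.trans h₂⟩, fun ⟨h₁, h₂⟩ => ⟨h₁, h₁.symm.trans h₂⟩⟩

theorem CoverMap.cov_le_comp_of_cyc (hcov : CoverMap E cov)
    {p q r : DAt α × ℕ} (h : Cyc cov (some p) (some q) (some r)) :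
    cov r.1.1 ≤ comp (cov p.1.1) (cov q.1.1) :=
  hcov.cov_le_comp_of_le_comp p.1.2.1 q.1.2.1 r.1.2.1 h.1

theorem Ccomp_singleton_none_left (Y : Set (CAtom α)) : Ccomp cov {none} Y = Y := by
  ext w
  simp [Ccomp, cyc_none_left]

theorem Ccomp_singleton_none_right (X : Set (CAtom α)) : Ccomp cov X {none} = X := by
  ext w
  simp [Ccomp, cyc_none_mid]

theorem Ccomp_comm (hsym : Symmetric α) (X Y : Set (CAtom α)) : Ccomp cov X Y = Ccomp cov Y X := by
  ext w
  constructor <;> rintro ⟨u, hu, v, hv, h⟩ <;> exact ⟨v, hv, u, hu, (cyc_comm hsym).mp h⟩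

theorem Ccomp_sUnion_left (S : Set (Set (CAtom α))) (Y : Set (CAtom α)) :
    Ccomp cov (⋃₀ S) Y = ⋃ X ∈ S, Ccomp cov X Y := by
  ext w
  simp only [Ccomp, Set.mem_sUnion, Set.mem_iUnion, Set.mem_ofPred_eq, exists_prop]
  tauto

theorem Ccomp_sUnion_right (X : Set (CAtom α)) (S : Set (Set (CAtom α))) :
    Ccomp cov X (⋃₀ S) = ⋃ Y ∈ S, Ccomp cov X Y := by
  ext w
  simp only [Ccomp, Set.mem_sUnion, Set.mem_iUnion, Set.mem_ofPred_eq, exists_prop]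
  tauto

theorem some_mem_Jel {a : α} {n : ℕ} {z : DAt α} {k : ℕ} :
    some (z, k) ∈ Jel a n ↔ z.1 ≤ a ∧ n ≤ k := by
  simp [Jel]

theorem none_notMem_Jel {a : α} (ha : E.DivAtomOf a) {n : ℕ} :
    (none : CAtom α) ∉ Jel a n := by
  simpa [Jel] using not_ide_le_of_le_div ha.1.2.1 ha.2

theorem CoverMap.exists_of_mem_Jel (hcov : CoverMap E cov) {b : α} (hb : E.DivAtomOf b)
    {m : ℕ} {v : CAtom α} (hv : v ∈ Jel b m) :
    ∃ (y : DAt α) (j : ℕ), v = some (y, j) ∧ cov y.1 = b ∧ m ≤ j := by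
  rcases v with _ | ⟨y, j⟩
  · exact absurd hv (none_notMem_Jel hb)
  · obtain ⟨hyb, hj⟩ := some_mem_Jel.mp hv
    exact ⟨y, j, rfl, hcov.cov_eq y.2.1 hb.1 hyb, hj⟩

/-- Above the levels of `x` and `y` the thinning condition fails, so only the cycles that
do not lie in a single atom of `E` survive. -/
theorem some_mem_Ccomp_singleton_singleton_iff (hcov : CoverMap E cov) (hspec : SpecialExt E)
    {x y z : DAt α} {i j k : ℕ} (hi : i < k) (hj : j < k) :
    some (z, k) ∈ Ccomp cov {some (x, i)} {some (y, j)} ↔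
      z.1 ≤ comp (cov x.1) (cov y.1) ⊓ (cov x.1 ⊓ cov y.1)ᶜ := by
  have hT : ¬T3 i j k := fun h => by have := le_max_of_T3 h; omega
  have hsame : z.1 ≤ cov x.1 ⊓ cov y.1 ↔ cov x.1 = cov y.1 ∧ cov y.1 = cov z.1 := by
    rw [le_inf_iff, hcov.le_iff_cov_eq z.2.1 (hcov x.1 x.2.1).1,
      hcov.le_iff_cov_eq z.2.1 (hcov y.1 y.2.1).1]
    exact ⟨fun ⟨h₁, h₂⟩ => ⟨h₁.symm.trans h₂, h₂.symm⟩,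
      fun ⟨h₁, h₂⟩ => ⟨(h₁.trans h₂).symm, h₂.symm⟩⟩
  have hE : comp (cov x.1) (cov y.1) ∈ E.carrier :=
    E.comp_mem _ (hcov.cov_mem x.2.1) _ (hcov.cov_mem y.2.1)
  simp only [Ccomp, Set.mem_ofPred_eq, Set.mem_singleton_iff, exists_eq_left, Cyc]
  rw [le_inf_iff, z.2.1.le_compl_iff, hsame, ← hcov.cov_le_iff z.2.1 hE]
  constructor
  · rintro ⟨h, hcyc⟩
    exact ⟨hcov.cov_le_comp_of_le_comp x.2.1 y.2.1 z.2.1 h, fun h' => hT (hcyc h')⟩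
  · rintro ⟨h, hne⟩
    exact ⟨hspec.le_comp hcov x.2 y.2 z.2 hne h, fun h' => absurd h' hne⟩

theorem some_mem_Ccomp_singleton_Jel_iff [Finite α] (hsym : Symmetric α)
    (hcov : CoverMap E cov) (hspec : SpecialExt E) {x z : DAt α} {b : α} (hb : E.DivAtomOf b)
    {i m k : ℕ} (hi : i ≤ k) (hm : m ≤ k) :
    some (z, k) ∈ Ccomp cov {some (x, i)} (Jel b m) ↔ z.1 ≤ comp (cov x.1) b := by
  rw [← hcov.cov_le_iff z.2.1 (E.comp_mem _ (hcov.cov_mem x.2.1) _ hb.1.1)]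
  constructor
  · rintro ⟨u, rfl, v, hv, h⟩
    obtain ⟨y, j, rfl, rfl, -⟩ := hcov.exists_of_mem_Jel hb hv
    exact hcov.cov_le_comp_of_cyc h
  · intro h
    obtain ⟨y, hy, hyb, hzy⟩ := hspec.exists_le_comp hsym hcov x.2 z.2 hb h
    exact ⟨_, rfl, some (⟨y, hy⟩, k), some_mem_Jel.mpr ⟨hyb, hm⟩, hzy, fun _ => T3_of_le hi⟩

theorem some_mem_Ccomp_Jel_Jel_iff [Finite α] (hsym : Symmetric α) (hcov : CoverMap E cov)
    (hspec : SpecialExt E) {z : DAt α} {a b : α} (ha : E.DivAtomOf a) (hb : E.DivAtomOf b)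
    {m k : ℕ} (hm : m ≤ k) :
    some (z, k) ∈ Ccomp cov (Jel a m) (Jel b m) ↔ z.1 ≤ comp a b := by
  constructor
  · rintro ⟨u, hu, v, hv, h⟩
    obtain ⟨x, i, rfl, rfl, -⟩ := hcov.exists_of_mem_Jel ha hu
    obtain ⟨y, j, rfl, rfl, -⟩ := hcov.exists_of_mem_Jel hb hv
    exact (hcov.cov_le_iff z.2.1 (E.comp_mem _ ha.1.1 _ hb.1.1)).mp (hcov.cov_le_comp_of_cyc h)
  · intro h
    have : IsAtomic α := Finite.to_isAtomic
    obtain ⟨x, hx, hxa⟩ := (eq_bot_or_exists_atom_le a).resolve_left ha.1.2.1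
    have hcx : cov x = a := hcov.cov_eq hx ha.1 hxa
    obtain ⟨u, rfl, hv⟩ := (some_mem_Ccomp_singleton_Jel_iff hsym hcov hspec
      (x := ⟨x, hx, hxa.trans ha.2⟩) hb le_rfl hm).mpr (hcx ▸ h)
    exact ⟨_, some_mem_Jel.mpr ⟨hxa, hm⟩, hv⟩

/-- These are exactly the joins of elements of `Bset E m` (`AgreesAbove.eq_sUnion_Bset`),
i.e. the elements of the finite subalgebra of C_E(A) with atom set B_m. -/
def AgreesAbove (E : Subalgebra α) (m : ℕ) (s : Set (CAtom α)) : Prop :=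
  ∃ c ∈ E.carrier, ∀ (z : DAt α) (k : ℕ), m ≤ k → (some (z, k) ∈ s ↔ z.1 ≤ c)

namespace AgreesAbove

variable {m : ℕ} {s t : Set (CAtom α)}

theorem empty : AgreesAbove E m ∅ :=
  ⟨⊥, E.bot_mem, fun z _ _ => by simpa using z.2.1.1⟩

theorem union (hs : AgreesAbove E m s) (ht : AgreesAbove E m t) : AgreesAbove E m (s ∪ t) := by
  obtain ⟨c, hc, hsc⟩ := hs
  obtain ⟨d, hd, htd⟩ := ht
  exact ⟨c ⊔ d, E.sup_mem _ hc _ hd, fun z k hk => by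
    rw [Set.mem_union, hsc z k hk, htd z k hk, z.2.1.le_sup_iff]⟩

theorem compl (hs : AgreesAbove E m s) : AgreesAbove E m sᶜ := by
  obtain ⟨c, hc, hsc⟩ := hs
  exact ⟨cᶜ, E.compl_mem _ hc, fun z k hk => by
    rw [Set.mem_compl_iff, hsc z k hk, z.2.1.le_compl_iff]⟩

theorem biUnion {ι : Type*} {S : Set ι} (hS : S.Finite) {f : ι → Set (CAtom α)}
    (hf : ∀ i ∈ S, AgreesAbove E m (f i)) : AgreesAbove E m (⋃ i ∈ S, f i) := by
  induction S, hS using Set.Finite.induction_on with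
  | empty => simpa using empty
  | @insert i S _ _ ih =>
    rw [Set.biUnion_insert]
    exact (hf i (Set.mem_insert _ _)).union (ih fun j hj => hf j (Set.mem_insert_of_mem _ hj))

theorem of_mem_Bset {b : Set (CAtom α)} (hb : b ∈ Bset E m) : AgreesAbove E m b := by
  rcases hb with (rfl | ⟨x, i, hi, rfl⟩) | ⟨a, ha, rfl⟩
  · exact ⟨⊥, E.bot_mem, fun z _ _ => by simpa using z.2.1.1⟩
  · refine ⟨⊥, E.bot_mem, fun z k hk => ?_⟩
    simp only [Set.mem_singleton_iff, Option.some.injEq, Prod.ext_iff, le_bot_iff]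
    exact iff_of_false (fun h => by omega) z.2.1.1
  · exact ⟨a, ha.1.1, fun z k hk => by rw [some_mem_Jel]; exact and_iff_left hk⟩

theorem eq_sUnion_Bset (hcov : CoverMap E cov) (hs : AgreesAbove E m s) :
    s = ⋃₀ {b ∈ Bset E m | b ⊆ s} := by
  obtain ⟨c, hc, hsc⟩ := hs
  refine subset_antisymm (fun w hw => ?_) (Set.sUnion_subset fun b hb => hb.2)
  rcases w with _ | ⟨z, k⟩
  · exact ⟨{none}, ⟨Or.inl (Or.inl rfl), Set.singleton_subset_iff.mpr hw⟩, rfl⟩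
  rcases lt_or_ge k m with hk | hk
  · exact ⟨{some (z, k)}, ⟨Or.inl (Or.inr ⟨z, k, hk, rfl⟩), Set.singleton_subset_iff.mpr hw⟩, rfl⟩
  refine ⟨Jel (cov z.1) m, ⟨Or.inr ⟨_, hcov.divAtomOf_cov z.2, rfl⟩, fun v hv => ?_⟩,
    some_mem_Jel.mpr ⟨hcov.le_cov z.2.1, hk⟩⟩
  obtain ⟨y, j, rfl, hyz, hj⟩ := hcov.exists_of_mem_Jel (hcov.divAtomOf_cov z.2) hv
  rw [hsc y j hj, ← hcov.cov_le_iff y.2.1 hc, hyz, hcov.cov_le_iff z.2.1 hc, ← hsc z k hk]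
  exact hw

theorem symmDiff_Jel_finite [Finite α] (hs : AgreesAbove E m s) :
    ∃ a ∈ E.carrier, (symmDiff s (Jel a 0)).Finite := by
  obtain ⟨c, hc, hsc⟩ := hs
  refine ⟨c, hc, (((Set.finite_univ.prod (Set.finite_Iio m)).image some).insert none).subset ?_⟩
  rintro (_ | ⟨z, k⟩) hw
  · exact Set.mem_insert _ _
  · rcases lt_or_ge k m with hk | hk
    · exact Set.mem_insert_of_mem _ ⟨(z, k), ⟨Set.mem_univ _, hk⟩, rfl⟩
    · rw [Set.mem_symmDiff, hsc z k hk, some_mem_Jel, and_iff_left (Nat.zero_le k)] at hw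
      tauto

end AgreesAbove

theorem Bset_finite [Finite α] (E : Subalgebra α) (m : ℕ) : (Bset E m).Finite := by
  refine ((Set.finite_singleton _).union ?_).union ((Set.finite_range fun a => Jel a m).subset ?_)
  · refine ((Set.finite_univ.prod (Set.finite_Iio m)).image fun p => {some p}).subset ?_
    rintro _ ⟨x, i, hi, rfl⟩
    exact ⟨(x, i), ⟨Set.mem_univ _, hi⟩, rfl⟩
  · rintro _ ⟨a, -, rfl⟩
    exact ⟨a, rfl⟩

theorem setOf_agreesAbove_finite [Finite α] (hcov : CoverMap E cov) (m : ℕ) :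
    {s | AgreesAbove E m s}.Finite := by
  refine ((Bset_finite E m).finite_subsets.image Set.sUnion).subset fun s hs => ?_
  exact ⟨_, fun b hb => hb.1, (hs.eq_sUnion_Bset hcov).symm⟩

theorem agreesAbove_Ccomp_singleton_Jel [Finite α] (hsym : Symmetric α) (hcov : CoverMap E cov)
    (hspec : SpecialExt E) {m i : ℕ} (hi : i < m) {x : DAt α} {b : α} (hb : E.DivAtomOf b) :
    AgreesAbove E m (Ccomp cov {some (x, i)} (Jel b m)) :=
  ⟨_, E.comp_mem _ (hcov.cov_mem x.2.1) _ hb.1.1, fun _ _ hk =>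
    some_mem_Ccomp_singleton_Jel_iff hsym hcov hspec hb (by omega) hk⟩

theorem agreesAbove_Ccomp_of_mem_Bset [Finite α] (hsym : Symmetric α) (hcov : CoverMap E cov)
    (hspec : SpecialExt E) {m : ℕ} {b b' : Set (CAtom α)} (hb : b ∈ Bset E m)
    (hb' : b' ∈ Bset E m) : AgreesAbove E m (Ccomp cov b b') := by
  rcases hb with (rfl | ⟨x, i, hi, rfl⟩) | ⟨a, ha, rfl⟩
  · rw [Ccomp_singleton_none_left]
    exact .of_mem_Bset hb'
  all_goals rcases hb' with (rfl | ⟨y, j, hj, rfl⟩) | ⟨b, hb, rfl⟩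
  · rw [Ccomp_singleton_none_right]
    exact .of_mem_Bset (Or.inl (Or.inr ⟨x, i, hi, rfl⟩))
  · exact ⟨_, E.inf_mem (E.comp_mem _ (hcov.cov_mem x.2.1) _ (hcov.cov_mem y.2.1))
      (E.compl_mem _ (E.inf_mem (hcov.cov_mem x.2.1) (hcov.cov_mem y.2.1))), fun _ _ hk =>
      some_mem_Ccomp_singleton_singleton_iff hcov hspec (by omega) (by omega)⟩
  · exact agreesAbove_Ccomp_singleton_Jel hsym hcov hspec hi hb
  · rw [Ccomp_singleton_none_right]
    exact .of_mem_Bset (Or.inr ⟨a, ha, rfl⟩)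
  · rw [Ccomp_comm hsym]
    exact agreesAbove_Ccomp_singleton_Jel hsym hcov hspec hj ha
  · exact ⟨_, E.comp_mem _ ha.1.1 _ hb.1.1, fun _ _ hk =>
      some_mem_Ccomp_Jel_Jel_iff hsym hcov hspec ha hb hk⟩

theorem AgreesAbove.Ccomp [Finite α] (hsym : Symmetric α) (hcov : CoverMap E cov)
    (hspec : SpecialExt E) {m : ℕ} {s t : Set (CAtom α)} (hs : AgreesAbove E m s)
    (ht : AgreesAbove E m t) : AgreesAbove E m (Ccomp cov s t) := by
  have hfin : ∀ u : Set (CAtom α), {b ∈ Bset E m | b ⊆ u}.Finite := fun _ =>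
    (Bset_finite E m).subset (Set.sep_subset _ _)
  rw [hs.eq_sUnion_Bset hcov, ht.eq_sUnion_Bset hcov, Ccomp_sUnion_left]
  refine .biUnion (hfin s) fun b hb => ?_
  rw [Ccomp_sUnion_right]
  exact .biUnion (hfin t) fun b' hb' =>
    agreesAbove_Ccomp_of_mem_Bset hsym hcov hspec hb.1 hb'.1

theorem GenFrom.agreesAbove [Finite α] (hsym : Symmetric α) (hcov : CoverMap E cov)
    (hspec : SpecialExt E) {m : ℕ} {G : Set (Set (CAtom α))} (hG : ∀ s ∈ G, AgreesAbove E m s)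
    {t : Set (CAtom α)} (ht : GenFrom cov G t) :
    AgreesAbove E m t := by
  induction ht with
  | base hs => exact hG _ hs
  | bot => exact .empty
  | idel => exact .of_mem_Bset (Or.inl (Or.inl rfl))
  | compl _ ih => exact ih.compl
  | sup _ _ ih₁ ih₂ => exact ih₁.union ih₂
  | cmp _ _ ih₁ ih₂ => exact ih₁.Ccomp hsym hcov hspec ih₂

theorem Gen.eventually_agreesAbove [Finite α] (hsym : Symmetric α) (hcov : CoverMap E cov)
    (hspec : SpecialExt E) {s : Set (CAtom α)} (hs : Gen cov s) :
    ∀ᶠ m in Filter.atTop, AgreesAbove E m s := by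
  induction hs with
  | base hs =>
    obtain ⟨_ | ⟨z, i⟩, rfl⟩ := hs
    · exact .of_forall fun _ => .of_mem_Bset (Or.inl (Or.inl rfl))
    · exact (Filter.eventually_gt_atTop i).mono fun _ hi =>
        .of_mem_Bset (Or.inl (Or.inr ⟨z, i, hi, rfl⟩))
  | bot => exact .of_forall fun _ => .empty
  | idel => exact .of_forall fun _ => .of_mem_Bset (Or.inl (Or.inl rfl))
  | compl _ ih => exact ih.mono fun _ h => h.compl
  | sup _ _ ih₁ ih₂ => exact (ih₁.and ih₂).mono fun _ h => h.1.union h.2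
  | cmp _ _ ih₁ ih₂ => exact (ih₁.and ih₂).mono fun _ h => h.1.Ccomp hsym hcov hspec h.2

end NA

theorem stmt9_general {α : Type} [RA α] [Fintype α]
    (hsym : NA.Symmetric α)
    (E : NA.Subalgebra α) (cov : α → α) (hcov : NA.CoverMap E cov)
    (hspec : NA.SpecialExt E) :
    (∀ G : Set (Set (NA.CAtom α)), G.Finite → (∀ s ∈ G, NA.Gen cov s) →
      {t | NA.GenFrom cov G t}.Finite) ∧
    (∀ s : Set (NA.CAtom α), NA.Gen cov s →
      ∃ a ∈ E.carrier, (symmDiff s (NA.Jel a 0)).Finite) := by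
  constructor
  · intro G hG hGgen
    obtain ⟨m, hm⟩ := ((Filter.eventually_all_finite hG).mpr fun s hs =>
      (hGgen s hs).eventually_agreesAbove hsym hcov hspec).exists
    exact (NA.setOf_agreesAbove_finite hcov m).subset fun t ht =>
      NA.GenFrom.agreesAbove hsym hcov hspec hm ht
  · intro s hs
    obtain ⟨m, hm⟩ := (hs.eventually_agreesAbove hsym hcov hspec).exists
    exact hm.symmDiff_Jel_finite

/-- If A is a special extension of E and B is the subalgebra of
C_E(A) generated by its atoms, then every finitely generated subalgebra of B is
finite, and every element of B differs from an element of the canonical copy of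
E (via a ↦ J(a,0)) by a join of finitely many atoms. -/
theorem stmt9 {α : Type} [RA α] [Fintype α]
    (hsym : NA.Symmetric α) (hint : NA.Integral α)
    (E : NA.Subalgebra α) (cov : α → α) (hcov : NA.CoverMap E cov)
    (hspec : NA.SpecialExt E) :
    (∀ G : Set (Set (NA.CAtom α)), G.Finite → (∀ s ∈ G, NA.Gen cov s) →
      {t | NA.GenFrom cov G t}.Finite) ∧
    (∀ s : Set (NA.CAtom α), NA.Gen cov s →
      ∃ a ∈ E.carrier, (symmDiff s (NA.Jel a 0)).Finite) :=
  stmt9_general hsym E cov hcov hspec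
end

section
/- Every atomic symmetric integral relation algebra containing a flexible trio has the 1-point extension property. -/
universe u v

/-!
Let `w` be a member of the trio compatible with both `x` and `y`, i.e. `0' ≤ w;x` and
`0' ≤ w;y`: it exists because every diversity atom is compatible with at least two of the three
members of the trio, and two 2-element subsets of a 3-element set meet. Place the new point so
that it sees `x` from `i`, `y` from `j`, and `w` from every other old point. Since `w;w = 1`, every
new triangle with two old points `l ≠ m` is consistent: `μ l m` is a diversity atom below
`w;x`, `w;y` or `w;w`, except for `{l, m} = {i, j}`, where `μ i j ≤ x;y` is the hypothesis.
In a symmetric algebra the Peirce laws make consistency of a triangle of atoms independent of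
how it is read, so this is all that has to be checked.
-/

namespace NA

variable {α : Type u} [NA α]

theorem DivAtom.ne_ide {x : α} (hx : DivAtom x) : x ≠ ide := by
  rintro rfl
  exact hx.1.1 (le_compl_self.mp hx.2)

theorem le_div_of_ne_ide (hint : Integral α) {x : α} (hx : IsAtom x) (hne : x ≠ ide) :
    x ≤ div :=
  (hx.disjoint_of_ne hint hne).le_compl_right

section Symmetric

variable (hsym : Symmetric α)
include hsym

theorem comp_inf_eq_bot_comm (p q r : α) : comp p q ⊓ r = ⊥ ↔ comp p r ⊓ q = ⊥ := by
  simpa only [hsym p] using peirce1 p q r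

theorem comp_comm_s11 (p q : α) : comp p q = comp q p := by
  have hle : ∀ p q : α, comp p q ≤ comp q p := fun p q => by
    rw [← disjoint_compl_right_iff, disjoint_iff, comp_inf_eq_bot_comm hsym, peirce2, hsym,
      comp_inf_eq_bot_comm hsym, ← disjoint_iff, disjoint_compl_right_iff]
  exact (hle p q).antisymm (hle q p)

theorem le_comp_comm {p q r : α} (hq : IsAtom q) (hr : IsAtom r) :
    r ≤ comp p q ↔ q ≤ comp p r := by
  rw [← hr.not_disjoint_iff_le, ← hq.not_disjoint_iff_le, disjoint_comm, disjoint_iff,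
    comp_inf_eq_bot_comm hsym, ← disjoint_iff, disjoint_comm]

theorem ide_le_comp_self (hint : Integral α) {x : α} (hx : IsAtom x) : ide ≤ comp x x :=
  (le_comp_comm hsym hx hint).mpr (comp_ide x).ge

end Symmetric

theorem FlexTrio.two_compatible (hsym : Symmetric α) {a b c : α} (htrio : FlexTrio a b c)
    {u : α} (hu : DivAtom u) :
    (div ≤ comp a u ∧ div ≤ comp b u) ∨ (div ≤ comp a u ∧ div ≤ comp c u) ∨
      (div ≤ comp b u ∧ div ≤ comp c u) := by
  obtain ⟨-, -, -, -, -, -, haa, hbb, -, hab, hac, hbc, hmax⟩ := htrio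
  by_cases hua : u = a
  · subst hua
    exact Or.inl ⟨haa ▸ le_top, (comp_comm_s11 hsym b u ▸ hab).ge⟩
  by_cases hub : u = b
  · subst hub
    exact Or.inl ⟨hab.ge, hbb ▸ le_top⟩
  by_cases huc : u = c
  · subst huc
    exact Or.inl ⟨hac.ge, hbc.ge⟩
  have hmem : u ∉ ({ide, a, b, c} : Set α) := by
    simp only [Set.mem_insert_iff, Set.mem_singleton_iff, not_or]
    exact ⟨hu.ne_ide, hua, hub, huc⟩
  simp only [comp_comm_s11 hsym _ u]
  rcases hmax u hu.1 hmem with ⟨h₁, h₂⟩ | ⟨h₁, h₂⟩ | ⟨h₁, h₂⟩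
  · exact Or.inl ⟨h₁.ge, h₂.ge⟩
  · exact Or.inr (Or.inl ⟨h₁.ge, h₂.ge⟩)
  · exact Or.inr (Or.inr ⟨h₁.ge, h₂.ge⟩)

theorem FlexTrio.exists_compatible (hsym : Symmetric α) {a b c : α} (htrio : FlexTrio a b c)
    {x y : α} (hx : DivAtom x) (hy : DivAtom y) :
    ∃ w, DivAtom w ∧ comp w w = ⊤ ∧ div ≤ comp w x ∧ div ≤ comp w y := by
  have hx' := htrio.two_compatible hsym hx
  have hy' := htrio.two_compatible hsym hy
  obtain ⟨ha, hb, hc, -, -, -, haa, hbb, hcc, -⟩ := htrio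
  rcases hx' with ⟨hax, hbx⟩ | ⟨hax, hcx⟩ | ⟨hbx, hcx⟩ <;>
    rcases hy' with ⟨hay, hby⟩ | ⟨hay, hcy⟩ | ⟨hby, hcy⟩
  all_goals first
    | exact ⟨a, ha, haa, ‹_›, ‹_›⟩
    | exact ⟨b, hb, hbb, ‹_›, ‹_›⟩
    | exact ⟨c, hc, hcc, ‹_›, ‹_›⟩

section Extension

variable {k : ℕ}

def extendMatrix (μ : Fin k → Fin k → α) (z : Fin k → α) : Fin (k + 1) → Fin (k + 1) → α :=
  Fin.lastCases (Fin.lastCases ide z) fun l => Fin.lastCases (z l) (μ l)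

variable (μ : Fin k → Fin k → α) (z : Fin k → α)

@[simp] theorem extendMatrix_last_last : extendMatrix μ z (Fin.last k) (Fin.last k) = ide := by
  simp [extendMatrix]

@[simp] theorem extendMatrix_last_castSucc (m : Fin k) :
    extendMatrix μ z (Fin.last k) m.castSucc = z m := by
  simp [extendMatrix]

@[simp] theorem extendMatrix_castSucc_last (l : Fin k) :
    extendMatrix μ z l.castSucc (Fin.last k) = z l := by
  simp [extendMatrix]

@[simp] theorem extendMatrix_castSucc_castSucc (l m : Fin k) :
    extendMatrix μ z l.castSucc m.castSucc = μ l m := by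
  simp [extendMatrix]

variable {μ z}

theorem IdCond.extendMatrix (hid : IdCond k μ) (hz : ∀ l, z l ≠ ide) :
    IdCond (k + 1) (extendMatrix μ z) := by
  simp only [IdCond, Fin.forall_fin_succ', extendMatrix_last_last, extendMatrix_last_castSucc,
    extendMatrix_castSucc_last, extendMatrix_castSucc_castSucc, Fin.castSucc_inj]
  exact ⟨fun l => ⟨hid l, iff_of_false (hz l) (Fin.castSucc_lt_last l).ne⟩,
    fun m => iff_of_false (hz m) (Fin.castSucc_lt_last m).ne', trivial⟩

theorem BasicMatrix.extendMatrix (hsym : Symmetric α) (hint : Integral α)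
    (hμ : BasicMatrix k μ) (hz : ∀ l, IsAtom (z l))
    (hμz : ∀ l m, l ≠ m → μ l m ≤ comp (z l) (z m)) :
    BasicMatrix (k + 1) (extendMatrix μ z) := by
  have hμz' : ∀ l m, μ l m ≤ comp (z l) (z m) := by
    intro l m
    rcases eq_or_ne l m with rfl | hlm
    · exact (hμ.2.1 l).trans (ide_le_comp_self hsym hint (hz l))
    · exact hμz l m hlm
  obtain ⟨hat, hdiag, hconv, htri⟩ := hμ
  simp only [BasicMatrix, Fin.forall_fin_succ', extendMatrix_last_last, extendMatrix_last_castSucc,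
    extendMatrix_castSucc_last, extendMatrix_castSucc_castSucc, show ∀ x : α, conv x = x from hsym]
  refine ⟨⟨fun l => ⟨hat l, hz l⟩, hz, hint⟩, ⟨hdiag, le_rfl⟩,
    ⟨fun l => ⟨fun m => (hsym _).symm.trans (hconv l m), trivial⟩, fun _ => trivial, trivial⟩,
    ⟨fun l => ⟨fun m => ⟨htri l m, hμz' l m⟩, fun m => ?_, (comp_ide _).ge⟩,
      ⟨fun l => ⟨fun m => (le_comp_comm hsym (hz l) (hat m l)).mp (hμz' m l), (ide_comp _).ge⟩,
        fun l => ide_le_comp_self hsym hint (hz l), (comp_ide _).ge⟩⟩⟩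
  rw [comp_comm_s11 hsym]
  exact (le_comp_comm hsym (hz l) (hat l m)).mp (comp_comm_s11 hsym (z m) (z l) ▸ hμz' l m)

end Extension

section PairColumn

variable {k : ℕ}

def pairColumn (i j : Fin k) (x y w : α) : Fin k → α :=
  fun l => if l = i then x else if l = j then y else w

theorem le_comp_pairColumn (hsym : Symmetric α) (hint : Integral α)
    {μ : Fin k → Fin k → α} (hμ : BasicMatrix k μ) (hid : IdCond k μ)
    {i j : Fin k} (hij : i ≠ j) {x y w : α} (hxy : μ i j ≤ comp x y)
    (hwx : div ≤ comp w x) (hwy : div ≤ comp w y) (hww : comp w w = ⊤) (l m : Fin k)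
    (hlm : l ≠ m) : μ l m ≤ comp (pairColumn i j x y w l) (pairColumn i j x y w m) := by
  have hdiv : μ l m ≤ div := le_div_of_ne_ide hint (hμ.1 l m) ((hid l m).not.mpr hlm)
  have hw : ∀ n, div ≤ comp w (pairColumn i j x y w n) := fun n => by
    unfold pairColumn
    split_ifs
    exacts [hwx, hwy, hww ▸ le_top]
  by_cases hl : l = i ∨ l = j
  · by_cases hm : m = i ∨ m = j
    · rcases hl with rfl | rfl <;> rcases hm with rfl | rfl
      · exact absurd rfl hlm
      · simpa [pairColumn, hij.symm] using hxy
      · simpa [pairColumn, hij.symm, comp_comm_s11 hsym y, ← hμ.2.2.1 l m, hsym _] using hxy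
      · exact absurd rfl hlm
    · rw [not_or] at hm
      rw [show pairColumn i j x y w m = w by simp [pairColumn, hm], comp_comm_s11 hsym]
      exact hdiv.trans (hw l)
  · rw [not_or] at hl
    rw [show pairColumn i j x y w l = w by simp [pairColumn, hl]]
    exact hdiv.trans (hw m)

end PairColumn

end NA

theorem stmt11_general {α : Type} [RA α]
    (hsym : NA.Symmetric α) (hint : NA.Integral α)
    (a b c : α) (htrio : NA.FlexTrio a b c) :
    NA.OnePointExt α := by
  intro k μ hμ hid x y hx hy i j hij hxy
  obtain ⟨w, hw, hww, hwx, hwy⟩ := htrio.exists_compatible hsym hx hy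
  have hz : ∀ l, NA.DivAtom (NA.pairColumn i j x y w l) := fun l => by
    unfold NA.pairColumn
    split_ifs <;> assumption
  refine ⟨NA.extendMatrix μ (NA.pairColumn i j x y w),
    hμ.extendMatrix hsym hint (fun l => (hz l).1)
      (NA.le_comp_pairColumn hsym hint hμ hid hij hxy hwx hwy hww),
    hid.extendMatrix fun l => (hz l).ne_ide, NA.extendMatrix_castSucc_castSucc μ _, ?_, ?_⟩
  · simp [NA.pairColumn]
  · simp [NA.pairColumn, hij.symm]

/-- Every atomic symmetric integral relation algebra containing a
flexible trio has the 1-point extension property. -/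
theorem stmt11 {α : Type} [RA α] (hat : IsAtomic α)
    (hsym : NA.Symmetric α) (hint : NA.Integral α)
    (a b c : α) (htrio : NA.FlexTrio a b c) :
    NA.OnePointExt α :=
  stmt11_general hsym hint a b c htrio
end

section
/- There exists a symmetric integral relation algebra with seven atoms 1', a, b, c, d, e, f, whose diversity cycles are all cycles on {a,b,c,d,e,f} except [a,d,d], [b,e,e], and [c,f,f], such that a, b, c form a flexible trio but no atom of the algebra is flexible. -/
universe u v

/-! The complex algebra (all sets of atoms) of a finite atom structure is a symmetric integral
relation algebra as soon as its cycle relation satisfies the identity law, is closed under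
permutations and satisfies the associativity law on atoms. For the seven atoms with every
diversity cycle except `[a,d,d]`, `[b,e,e]`, `[c,f,f]`, these laws and the flexible-trio
conditions are finite checks. A flexible atom `a` lies in every cycle `[x, a, y]` of diversity
atoms, whereas each atom here misses one: `[d, a, d]` for `a`, `[d, d, a]` for `d`, and so on. -/

namespace NA

variable {α : Type u} [NA α]

theorem Flexible.le_comp {a x y : α} (ha : Flexible a) (hx : DivAtom x) (hy : DivAtom y) :
    y ≤ comp x a := by
  by_cases hxa : x = a
  · rw [hxa, ha.2.1]
    exact le_top
  · rw [ha.2.2 x hx hxa]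
    exact hy.2

end NA

/-- `Cyc i j k` says that `[i, j, k]` is a cycle, i.e. `k ≤ i ; j`; the identity is the single
atom `one`. -/
class SymmAtomStructure (ι : Type*) where
  Cyc : ι → ι → ι → Prop
  one : ι
  cyc_one_right : ∀ i k, Cyc i one k ↔ i = k
  cyc_swap_right : ∀ {i j k}, Cyc i j k → Cyc i k j
  cyc_swap_outer : ∀ {i j k}, Cyc i j k → Cyc k j i
  cyc_assoc : ∀ i j n k, (∃ m, Cyc i j m ∧ Cyc m n k) ↔ (∃ m, Cyc j n m ∧ Cyc i m k)

namespace SymmAtomStructure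

variable {ι : Type*} [SymmAtomStructure ι]

theorem cyc_one_left (j k : ι) : Cyc one j k ↔ j = k := by
  constructor
  · intro h
    exact ((cyc_one_right k j).1 (cyc_swap_right (cyc_swap_outer h))).symm
  · rintro rfl
    exact cyc_swap_outer (cyc_swap_right ((cyc_one_right j j).2 rfl))

variable [Fintype ι] [∀ i j k : ι, Decidable (Cyc i j k)]

def comp (X Y : Finset ι) : Finset ι :=
  Finset.univ.filter fun k => ∃ i ∈ X, ∃ j ∈ Y, Cyc i j k

theorem mem_comp {X Y : Finset ι} {k : ι} :
    k ∈ comp X Y ↔ ∃ i ∈ X, ∃ j ∈ Y, Cyc i j k := by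
  simp [comp]

variable [DecidableEq ι]

theorem comp_inf_eq_bot_iff {X Y Z : Finset ι} :
    comp X Y ⊓ Z = ⊥ ↔ ∀ i ∈ X, ∀ j ∈ Y, ∀ k ∈ Z, ¬Cyc i j k := by
  simp only [Finset.inf_eq_inter, Finset.bot_eq_empty, Finset.eq_empty_iff_forall_notMem,
    Finset.mem_inter, mem_comp]
  grind

instance : NA (Finset ι) where
  comp := comp
  conv := id
  ide := {one}
  comp_ide X := by ext k; simp [mem_comp, cyc_one_right]
  ide_comp X := by ext k; simp [mem_comp, cyc_one_left]
  conv_conv _ := rfl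
  conv_sup _ _ := rfl
  comp_sup X Y Z := by ext k; simp only [mem_comp, Finset.sup_eq_union, Finset.mem_union]; grind
  sup_comp X Y Z := by ext k; simp only [mem_comp, Finset.sup_eq_union, Finset.mem_union]; grind
  peirce1 X Y Z := by
    simp only [id, comp_inf_eq_bot_iff]
    exact ⟨fun h i hi k hk j hj hc => h i hi j hj k hk (cyc_swap_right hc),
      fun h i hi j hj k hk hc => h i hi k hk j hj (cyc_swap_right hc)⟩
  peirce2 X Y Z := by
    simp only [id, comp_inf_eq_bot_iff]
    exact ⟨fun h k hk j hj i hi hc => h i hi j hj k hk (cyc_swap_outer hc),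
      fun h i hi j hj k hk hc => h k hk j hj i hi (cyc_swap_outer hc)⟩

instance : RA (Finset ι) where
  comp_assoc X Y Z := by
    ext k
    simp only [NA.comp, mem_comp]
    constructor
    · rintro ⟨m, ⟨i, hi, j, hj, hij⟩, n, hn, hmn⟩
      obtain ⟨m', hjn, him'⟩ := (cyc_assoc i j n k).1 ⟨m, hij, hmn⟩
      exact ⟨i, hi, m', ⟨j, hj, n, hn, hjn⟩, him'⟩
    · rintro ⟨i, hi, m, ⟨j, hj, n, hn, hjn⟩, him⟩
      obtain ⟨m', hij, hm'n⟩ := (cyc_assoc i j n k).2 ⟨m, hjn, him⟩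
      exact ⟨m', ⟨i, hi, j, hj, hij⟩, n, hn, hm'n⟩

theorem symmetric : NA.Symmetric (Finset ι) := fun _ => rfl

theorem integral : NA.Integral (Finset ι) := Finset.isAtom_singleton one

theorem singleton_le_comp_iff {i j k : ι} :
    ({k} : Finset ι) ≤ NA.comp {i} {j} ↔ Cyc i j k := by
  simp [NA.comp, mem_comp]

theorem divAtom_singleton_iff {i : ι} : NA.DivAtom ({i} : Finset ι) ↔ i ≠ one := by
  simp [NA.DivAtom, NA.div, NA.ide, Finset.isAtom_singleton, eq_comm]

theorem cyc_of_flexible {i : ι} (hi : NA.Flexible ({i} : Finset ι)) {j k : ι} (hj : j ≠ one)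
    (hk : k ≠ one) : Cyc j i k :=
  singleton_le_comp_iff.1 <|
    hi.le_comp (divAtom_singleton_iff.2 hj) (divAtom_singleton_iff.2 hk)

end SymmAtomStructure

inductive SevenAtom
  | one | a | b | c | d | e | f
  deriving DecidableEq

namespace SevenAtom

instance : Fintype SevenAtom :=
  Fintype.ofList [one, a, b, c, d, e, f] fun x => by cases x <;> decide

def isCycle : SevenAtom → SevenAtom → SevenAtom → Bool
  | one, y, z => y == z
  | x, one, z => x == z
  | x, y, one => x == y
  | x, y, z => !([(a, d, d), (d, a, d), (d, d, a), (b, e, e), (e, b, e), (e, e, b),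
      (c, f, f), (f, c, f), (f, f, c)].contains (x, y, z))

instance : SymmAtomStructure SevenAtom where
  Cyc x y z := isCycle x y z
  one := one
  cyc_one_right := by decide
  cyc_swap_right := by decide
  cyc_swap_outer := by decide
  cyc_assoc := by decide

instance (x y z : SevenAtom) : Decidable (SymmAtomStructure.Cyc x y z) :=
  inferInstanceAs (Decidable (isCycle x y z))

theorem exists_not_cyc (i : SevenAtom) :
    ∃ j k, j ≠ one ∧ k ≠ one ∧ ¬SymmAtomStructure.Cyc j i k := by
  cases i <;> decide

theorem exists_eq_singleton_of_mem {x : Finset SevenAtom}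
    (hx : x ∈ ({{a}, {b}, {c}, {d}, {e}, {f}} : Set (Finset SevenAtom))) :
    ∃ i ≠ one, x = {i} := by
  simp only [Set.mem_insert_iff, Set.mem_singleton_iff] at hx
  rcases hx with rfl | rfl | rfl | rfl | rfl | rfl <;> exact ⟨_, by decide, rfl⟩

theorem eq_ide_or_mem_of_isAtom {x : Finset SevenAtom} (hx : IsAtom x) :
    x = NA.ide ∨ x ∈ ({{a}, {b}, {c}, {d}, {e}, {f}} : Set (Finset SevenAtom)) := by
  obtain ⟨i, rfl⟩ := Finset.isAtom_iff.1 hx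
  cases i <;> decide

open SymmAtomStructure in
theorem flexTrio : NA.FlexTrio ({a} : Finset SevenAtom) {b} {c} := by
  refine ⟨divAtom_singleton_iff.2 (by decide), divAtom_singleton_iff.2 (by decide),
    divAtom_singleton_iff.2 (by decide), by decide, by decide, by decide, by decide, by decide,
    by decide, by decide, by decide, by decide, fun x hx hx' => ?_⟩
  obtain ⟨i, rfl⟩ := Finset.isAtom_iff.1 hx
  revert hx'
  cases i <;> decide

theorem not_flexible (x : Finset SevenAtom) : ¬NA.Flexible x := by
  intro hx
  obtain ⟨i, rfl⟩ := Finset.isAtom_iff.1 hx.1.1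
  obtain ⟨j, k, hj, hk, hjik⟩ := exists_not_cyc i
  exact hjik (SymmAtomStructure.cyc_of_flexible hx hj hk)

end SevenAtom

/-- There exists a symmetric integral relation algebra with seven
atoms 1', a, b, c, d, e, f whose diversity cycles are all cycles on
{a,b,c,d,e,f} except [a,d,d], [b,e,e], [c,f,f], such that a, b, c is a flexible
trio but no atom of the algebra is flexible. -/
theorem stmt17 :
    ∃ (α : Type) (inst : RA α),
      letI : RA α := inst
      ∃ a b c d e f : α,
        NA.Symmetric α ∧ NA.Integral α ∧
        List.Pairwise (· ≠ ·) [(NA.ide : α), a, b, c, d, e, f] ∧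
        IsAtom a ∧ IsAtom b ∧ IsAtom c ∧ IsAtom d ∧ IsAtom e ∧ IsAtom f ∧
        (∀ x : α, IsAtom x → x = NA.ide ∨ x ∈ ({a, b, c, d, e, f} : Set α)) ∧
        (∀ x y z : α, x ∈ ({a, b, c, d, e, f} : Set α) →
          y ∈ ({a, b, c, d, e, f} : Set α) →
          z ∈ ({a, b, c, d, e, f} : Set α) →
          (z ≤ NA.comp x y ↔
            ¬((x = a ∧ y = d ∧ z = d) ∨ (x = d ∧ y = a ∧ z = d) ∨
              (x = d ∧ y = d ∧ z = a) ∨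
              (x = b ∧ y = e ∧ z = e) ∨ (x = e ∧ y = b ∧ z = e) ∨
              (x = e ∧ y = e ∧ z = b) ∨
              (x = c ∧ y = f ∧ z = f) ∨ (x = f ∧ y = c ∧ z = f) ∨
              (x = f ∧ y = f ∧ z = c)))) ∧
        NA.FlexTrio a b c ∧ (∀ x : α, ¬ NA.Flexible x) := by
  refine ⟨Finset SevenAtom, inferInstance, {.a}, {.b}, {.c}, {.d}, {.e}, {.f},
    SymmAtomStructure.symmetric, SymmAtomStructure.integral, by decide,
    Finset.isAtom_singleton _, Finset.isAtom_singleton _, Finset.isAtom_singleton _,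
    Finset.isAtom_singleton _, Finset.isAtom_singleton _, Finset.isAtom_singleton _,
    fun _ => SevenAtom.eq_ide_or_mem_of_isAtom, ?_, SevenAtom.flexTrio, SevenAtom.not_flexible⟩
  intro x y z hx hy hz
  obtain ⟨i, hi, rfl⟩ := SevenAtom.exists_eq_singleton_of_mem hx
  obtain ⟨j, hj, rfl⟩ := SevenAtom.exists_eq_singleton_of_mem hy
  obtain ⟨k, hk, rfl⟩ := SevenAtom.exists_eq_singleton_of_mem hz
  simp only [SymmAtomStructure.singleton_le_comp_iff, Finset.singleton_inj]
  clear hx hy hz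
  revert i j k
  decide
end

section
/- Assume A is an atomic symmetric integral non-associative relation algebra, 3 ≤ n, and for every sequence of n−2 pairs of diversity atoms u_1,v_1,...,u_{n-2},v_{n-2} of A the meet of the products u_1;v_1 · u_2;v_2 · ... · u_{n-2};v_{n-2} is nonzero. Suppose additionally that in the thinned construction C_E(A) from E^{23}_{r+3} with its canonical r-atom subalgebra E (r ≥ 4, 3 ≤ n ≤ r+3), any such product meet is nonzero: specifically, if each product u_i;v_i is neither 0' nor 1, there is a function f assigning to each i an atom a_{f(i)} of E with u_i + v_i ≤ J(a_{f(i)},0), and if some index j ∈ {1,...,r-1} is missed by f then J(a_j,0) ≤ u_i;v_i for all i, yielding a nonzero meet. -/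
universe u v

/-!
A diversity atom `z^(k)` of `C_E(A)` lies below `x^(i) ; y^(j)` as soon as `z ≤ x ; y` in `A`
and `x, y, z` do not all have the same cover; in `E^{23}_{r+3}` the first condition only fails
for `z = x = y`. For the first claim, count: there are `r + 2` diversity atoms of `A` but at
most `r + 1` pairs, and every cover holds at most two atoms, so some cover holds more atoms than
there are pairs with first atom under it, hence at most one such pair. An atom `z` of that cover
different from the pair's first atom, with `k` the larger index of the pair, lies in every
product. For the second claim, a product of atoms with different covers is all of `0'`, so each
pair lies under a single `a_{f(i)}`, and a product of two atoms under `a_k` contains `J(a_j, 0)`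
for `j ≠ k`.
-/

open Finset Function

theorem IsAtom.eq_or_eq_of_le_sup {β : Type*} [DistribLattice β] [OrderBot β] {x a b : β}
    (hx : IsAtom x) (ha : IsAtom a) (hb : IsAtom b) (h : x ≤ a ⊔ b) : x = a ∨ x = b := by
  have hle : x ≤ a ∨ x ≤ b := by
    by_contra! hn
    exact hx.ne_bot ((disjoint_sup_right.2 ⟨hx.not_le_iff_disjoint.1 hn.1,
      hx.not_le_iff_disjoint.1 hn.2⟩).eq_bot_of_le h)
  exact hle.imp (ha.le_iff_eq hx.ne_bot).1 (hb.le_iff_eq hx.ne_bot).1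

theorem Finset.exists_card_filter_lt_of_card_lt {X ι K : Type*} [DecidableEq K] (S : Finset X)
    (s : Finset ι) (cls : X → K) (g : ι → K) (h : #s < #S) :
    ∃ z ∈ S, #{i ∈ s | g i = cls z} < #{x ∈ S | cls x = cls z} := by
  have hsum : ∑ c ∈ S.image cls, #{i ∈ s | g i = c} <
      ∑ c ∈ S.image cls, #{x ∈ S | cls x = c} := by
    rw [← card_eq_sum_card_image, sum_card_fiberwise_eq_card_filter]
    exact (card_filter_le _ _).trans_lt h
  obtain ⟨c, hc, hlt⟩ := exists_lt_of_sum_lt hsum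
  obtain ⟨z, hz, rfl⟩ := mem_image.1 hc
  exact ⟨z, hz, hlt⟩

namespace NA

theorem exists_thinning_witness {X K : Type*} [DecidableEq X] [DecidableEq K] (cls : X → K)
    (hcls : ∀ x y w, cls x = cls y → cls x = cls w → x = y ∨ x = w ∨ y = w)
    {m : ℕ} (S : Finset X) (hS : m < #S) (u v : Fin m → X × ℕ) :
    ∃ z ∈ S, ∃ k : ℕ, ∀ i, cls (u i).1 = cls z → cls (v i).1 = cls z →
      (z ≠ (u i).1 ∨ (u i).1 ≠ (v i).1) ∧ T3 (u i).2 (v i).2 k := by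
  obtain ⟨z, hzS, hlt⟩ := exists_card_filter_lt_of_card_lt S univ cls (fun i => cls (u i).1)
    (by simpa using hS)
  have hclass : #{x ∈ S | cls x = cls z} ≤ 2 := by
    by_contra! h
    obtain ⟨x, hx, y, hy, w, hw, hxy, hxw, hyw⟩ := two_lt_card.1 h
    simp only [mem_filter] at hx hy hw
    rcases hcls x y w (hx.2.trans hy.2.symm) (hx.2.trans hw.2.symm) with h | h | h <;>
      contradiction
  by_cases hpair : ∃ i₀, cls (u i₀).1 = cls z
  · obtain ⟨i₀, hi₀⟩ := hpair
    have hmem : ∀ {i}, cls (u i).1 = cls z →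
        i ∈ ({i ∈ univ | cls (u i).1 = cls z} : Finset _) := fun h => by simpa using h
    have hF : 1 < #{x ∈ S | cls x = cls z} := by have := card_pos.2 ⟨i₀, hmem hi₀⟩; omega
    obtain ⟨a, ha, b, hb, hab⟩ := one_lt_card.1 hF
    obtain ⟨z', hz', hne⟩ : ∃ z' ∈ {x ∈ S | cls x = cls z}, z' ≠ (u i₀).1 := by
      by_cases h : a = (u i₀).1
      exacts [⟨b, hb, fun hb' => hab (h.trans hb'.symm)⟩, ⟨a, ha, h⟩]
    rw [mem_filter] at hz'
    refine ⟨z', hz'.1, max (u i₀).2 (v i₀).2, fun i hi _ => ?_⟩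
    obtain rfl : i = i₀ := card_le_one.1 (by omega) i (hmem (hi.trans hz'.2)) i₀ (hmem hi₀)
    exact ⟨Or.inl hne, by unfold T3; omega⟩
  · push Not at hpair
    exact ⟨z, hzS, 0, fun i hi => absurd hi (hpair i)⟩

variable {α : Type u} [NA α]

theorem DivAtom.not_le_ide {x : α} (hx : DivAtom x) : ¬x ≤ ide := fun h =>
  hx.1.ne_bot (disjoint_self.1 (disjoint_compl_right.mono h hx.2))

theorem mem_Ccomp_singleton {cov : α → α} {a b w : CAtom α} :
    w ∈ Ccomp cov {a} {b} ↔ Cyc cov a b w := by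
  simp [Ccomp]

theorem cyc_some_iff {cov : α → α} {p q s : DAt α × ℕ} :
    Cyc cov (some p) (some q) (some s) ↔ (s.1 : α) ≤ comp (p.1 : α) q.1 ∧
      (cov p.1 = cov q.1 ∧ cov q.1 = cov s.1 → T3 p.2 q.2 s.2) :=
  Iff.rfl

theorem iInter_Ccomp_nonempty {cov : α → α}
    (hle : ∀ x y z : DAt α, (z ≠ x ∨ x ≠ y) → (z : α) ≤ comp (x : α) y)
    (hcls : ∀ x y w : DAt α, cov x = cov y → cov x = cov w → x = y ∨ x = w ∨ y = w)
    {m : ℕ} (S : Finset (DAt α)) (hS : m < #S) (u v : Fin m → DAt α × ℕ) :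
    (⋂ i, Ccomp cov {(some (u i) : CAtom α)} {some (v i)}).Nonempty := by
  classical
  obtain ⟨z, -, k, hzk⟩ := exists_thinning_witness (fun x : DAt α => cov x) hcls S hS u v
  refine ⟨some (z, k), Set.mem_iInter.2 fun i => mem_Ccomp_singleton.2 (cyc_some_iff.2 ?_)⟩
  by_cases hc : cov (u i).1 = cov z ∧ cov (v i).1 = cov z
  · obtain ⟨hne, hT⟩ := hzk i hc.1 hc.2
    exact ⟨hle _ _ _ hne, fun _ => hT⟩
  · refine ⟨hle (u i).1 (v i).1 z ?_, fun h => absurd ⟨h.1.trans h.2, h.2⟩ hc⟩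
    by_contra! h
    exact hc ⟨by rw [h.1], by rw [h.1, ← h.2]⟩

theorem Ccomp_eq_compl_ide {cov : α → α}
    (hle : ∀ x y z : DAt α, (z ≠ x ∨ x ≠ y) → (z : α) ≤ comp (x : α) y)
    {x y : DAt α × ℕ} (hcov : cov x.1 ≠ cov y.1) :
    Ccomp cov {(some x : CAtom α)} {some y} = ({none} : Set (CAtom α))ᶜ := by
  have hxy : x.1 ≠ y.1 := fun h => hcov (by rw [h])
  ext (_ | p)
  · rw [mem_Ccomp_singleton]
    exact iff_of_false (fun h => hxy (congrArg Prod.fst (show x = y from h))) (by simp)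
  · rw [mem_Ccomp_singleton]
    exact iff_of_true (cyc_some_iff.2 ⟨hle _ _ _ (Or.inr hxy), fun h => absurd h.1 hcov⟩)
      (by simp)

section Cover

variable {ι : Type*} {aa : ι → α} {cov : α → α}

theorem eq_of_le_of_le_of_pairwise_disjoint (hdisj : Pairwise (Disjoint on aa)) {x : α}
    (hx : x ≠ ⊥) {i j : ι} (hi : x ≤ aa i) (hj : x ≤ aa j) : i = j := by
  by_contra h
  exact hx (disjoint_self.1 ((hdisj h).mono hi hj))

theorem le_cov (hcov : ∀ x : α, DivAtom x → ∃ i, cov x = aa i ∧ x ≤ aa i) {x : α}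
    (hx : DivAtom x) : x ≤ cov x := by
  obtain ⟨i, hci, hi⟩ := hcov x hx
  exact hci ▸ hi

theorem cov_eq_of_le (hdisj : Pairwise (Disjoint on aa))
    (hcov : ∀ x : α, DivAtom x → ∃ i, cov x = aa i ∧ x ≤ aa i) {x : α} (hx : DivAtom x) {j : ι}
    (hj : x ≤ aa j) : cov x = aa j := by
  obtain ⟨i, hci, hi⟩ := hcov x hx
  rw [hci, eq_of_le_of_le_of_pairwise_disjoint hdisj hx.1.ne_bot hi hj]

theorem eq_or_eq_or_eq_of_cov_eq (hcov : ∀ x : α, DivAtom x → ∃ i, cov x = aa i ∧ x ≤ aa i)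
    (hpair : ∀ i, ∃ a b : α, IsAtom a ∧ IsAtom b ∧ aa i = a ⊔ b) (x y w : DAt α)
    (hxy : cov x = cov y) (hxw : cov x = cov w) : x = y ∨ x = w ∨ y = w := by
  obtain ⟨i, hci, -⟩ := hcov x x.2
  obtain ⟨a, b, ha, hb, hab⟩ := hpair i
  have hmem : ∀ t : DAt α, cov t = cov x → (t : α) = a ∨ (t : α) = b := fun t ht =>
    t.2.1.eq_or_eq_of_le_sup ha hb (hab ▸ hci ▸ ht ▸ le_cov hcov t.2)
  simp only [Subtype.ext_iff]
  rcases hmem x rfl with h₁ | h₁ <;> rcases hmem y hxy.symm with h₂ | h₂ <;>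
    rcases hmem w hxw.symm with h₃ | h₃ <;> simp only [h₁, h₂, h₃, true_or, or_true]

theorem Jel_subset_Ccomp (hdisj : Pairwise (Disjoint on aa))
    (hcov : ∀ x : α, DivAtom x → ∃ i, cov x = aa i ∧ x ≤ aa i)
    (hle : ∀ x y z : DAt α, (z ≠ x ∨ x ≠ y) → (z : α) ≤ comp (x : α) y)
    {j k : ι} (hjk : j ≠ k) (hide : ¬(ide : α) ≤ aa j) {x y : DAt α × ℕ}
    (hx : (x.1 : α) ≤ aa k) (hy : (y.1 : α) ≤ aa k) :
    Jel (aa j) 0 ⊆ Ccomp cov {(some x : CAtom α)} {some y} := by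
  rintro w (⟨p, rfl, hp, -⟩ | ⟨-, hidej⟩)
  · refine mem_Ccomp_singleton.2
      (cyc_some_iff.2 ⟨hle _ _ _ (Or.inl fun h => hjk ?_), fun h => ?_⟩)
    · exact eq_of_le_of_le_of_pairwise_disjoint hdisj p.1.2.1.ne_bot hp (h ▸ hx)
    · refine absurd (eq_of_le_of_le_of_pairwise_disjoint hdisj y.1.2.1.ne_bot ?_ hy) hjk
      exact (le_cov hcov y.1.2).trans (h.2.trans (cov_eq_of_le hdisj hcov p.1.2 hp)).le
  · exact absurd hidej hide

theorem exists_cover_index (hdisj : Pairwise (Disjoint on aa))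
    (hcov : ∀ x : α, DivAtom x → ∃ i, cov x = aa i ∧ x ≤ aa i)
    (hle : ∀ x y z : DAt α, (z ≠ x ∨ x ≠ y) → (z : α) ≤ comp (x : α) y)
    {i₀ : ι} (h₀ : aa i₀ = ide) (hide : (ide : α) ≠ ⊥) {m : ℕ} (u v : Fin m → DAt α × ℕ)
    (hne : ∀ i, Ccomp cov {(some (u i) : CAtom α)} {some (v i)} ≠
      ({none} : Set (CAtom α))ᶜ) :
    ∃ f : Fin m → ι,
      (∀ i, f i ≠ i₀ ∧ ((u i).1 : α) ≤ aa (f i) ∧ ((v i).1 : α) ≤ aa (f i)) ∧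
      ∀ j, j ≠ i₀ → (∀ i, f i ≠ j) → ∀ i,
        Jel (aa j) 0 ⊆ Ccomp cov {(some (u i) : CAtom α)} {some (v i)} := by
  choose f hfc hf using fun i => hcov _ (u i).1.2
  have hv : ∀ i, ((v i).1 : α) ≤ aa (f i) := fun i => by
    by_contra h
    refine hne i (Ccomp_eq_compl_ide hle fun hc => h ?_)
    rw [← hfc i, hc]
    exact le_cov hcov (v i).1.2
  refine ⟨f, fun i => ⟨fun h => ?_, hf i, hv i⟩, fun j hj hjf i =>
    Jel_subset_Ccomp hdisj hcov hle (hjf i).symm (fun h => ?_) (hf i) (hv i)⟩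
  · exact (u i).1.2.not_le_ide (h₀ ▸ h ▸ hf i)
  · exact hj (eq_of_le_of_le_of_pairwise_disjoint hdisj hide h h₀.symm.le)

end Cover

theorem pairwise_disjoint_of_eq_sup {κ ι ι' : Type*} {e : κ → α} (he : ∀ s, IsAtom (e s))
    (hinj : Injective e) (idx : κ → ι') {g : ι → ι'} (hg : Injective g) {aa : ι → α}
    (h : ∀ j, ∃ p q, aa j = e p ⊔ e q ∧ idx p = g j ∧ idx q = g j) :
    Pairwise (Disjoint on aa) := by
  intro i j hij
  obtain ⟨p, q, hi, hp, hq⟩ := h i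
  obtain ⟨p', q', hj, hp', hq'⟩ := h j
  have hne : ∀ s t, idx s = g i → idx t = g j → Disjoint (e s) (e t) := fun s t hs ht =>
    (he s).disjoint_of_ne (he t) (hinj.ne fun hst => hij (hg (hs.symm.trans (hst ▸ ht))))
  simp only [onFun, hi, hj, disjoint_sup_left, disjoint_sup_right]
  refine ⟨⟨?_, ?_⟩, ?_, ?_⟩ <;> apply hne <;> assumption

section E23

variable {q : ℕ} {e : Fin q → α}

theorem IsE23.divAtom (hE : IsE23 q e) {s : Fin q} (hs : (s : ℕ) ≠ 0) : DivAtom (e s) := by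
  obtain ⟨-, hint, hinj, hide, hatom, -⟩ := hE
  refine ⟨hatom s, le_compl_iff_disjoint_right.2 ((hatom s).disjoint_of_ne hint fun h => ?_)⟩
  exact hs (congrArg Fin.val (hinj (h.trans (hide ⟨0, s.pos⟩ rfl).symm)))

theorem IsE23.exists_eq (hE : IsE23 q e) {x : α} (hx : DivAtom x) :
    ∃ s : Fin q, (s : ℕ) ≠ 0 ∧ x = e s := by
  have ⟨_, _, _, hide, _, hsurj, _⟩ := hE
  obtain ⟨s, rfl⟩ := hsurj x hx.1
  exact ⟨s, fun h => hx.not_le_ide (hide s h).le, rfl⟩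

theorem IsE23.le_comp (hE : IsE23 q e) (x y z : DAt α) (h : z ≠ x ∨ x ≠ y) :
    (z : α) ≤ comp (x : α) y := by
  have ⟨_, _, _, _, hatom, _, hdist, hsame⟩ := hE
  obtain ⟨s, hs, hxs⟩ := hE.exists_eq x.2
  obtain ⟨t, ht, hyt⟩ := hE.exists_eq y.2
  by_cases hst : s = t
  · subst hst
    have hzx : (z : α) ≠ x := Subtype.coe_ne_coe.2
      (h.resolve_right (not_not.2 (Subtype.ext (hxs.trans hyt.symm))))
    rw [hxs, hyt, hsame s hs]
    exact le_compl_iff_disjoint_right.2 (z.2.1.disjoint_of_ne (hatom s) (hxs ▸ hzx))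
  · rw [hxs, hyt, hdist s t hs ht hst]
    exact z.2.2

end E23

/-- `a_j` is the join of the atoms `e_s` with `coverIndex s = j`. -/
def coverIndex (s : ℕ) : ℕ := if s ≤ 6 then (s + 1) / 2 else s - 3

theorem exists_eq_sup_coverIndex {r : ℕ} (hr : 4 ≤ r) (e : Fin (r + 3) → α)
    (he0 : e ⟨0, by omega⟩ = ide) (aa : Fin r → α)
    (h0 : aa ⟨0, by omega⟩ = (ide : α))
    (h1 : aa ⟨1, by omega⟩ = e ⟨1, by omega⟩ ⊔ e ⟨2, by omega⟩)
    (h2 : aa ⟨2, by omega⟩ = e ⟨3, by omega⟩ ⊔ e ⟨4, by omega⟩)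
    (h3 : aa ⟨3, by omega⟩ = e ⟨5, by omega⟩ ⊔ e ⟨6, by omega⟩)
    (hrest : ∀ i : Fin r, 4 ≤ (i : ℕ) →
      aa i = e ⟨(i : ℕ) + 3, Nat.add_lt_add_right i.isLt 3⟩) (j : Fin r) :
    ∃ p q : Fin (r + 3), aa j = e p ⊔ e q ∧ coverIndex p = j ∧ coverIndex q = j := by
  obtain ⟨j, hj⟩ := j
  rcases (by omega : j = 0 ∨ j = 1 ∨ j = 2 ∨ j = 3 ∨ 4 ≤ j) with rfl | rfl | rfl | rfl | h4
  · exact ⟨_, _, by rw [h0, he0, sup_idem], by simp [coverIndex], by simp [coverIndex]⟩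
  · exact ⟨_, _, h1, by simp [coverIndex], by simp [coverIndex]⟩
  · exact ⟨_, _, h2, by simp [coverIndex], by simp [coverIndex]⟩
  · exact ⟨_, _, h3, by simp [coverIndex], by simp [coverIndex]⟩
  · refine ⟨_, _, (hrest ⟨j, hj⟩ h4).trans (sup_idem _).symm, ?_, ?_⟩ <;>
      simp only [coverIndex] <;> split_ifs <;> omega

end NA

/-- In the thinned construction C_E(A) from A = E^{23}_{r+3} with
its canonical r-atom subalgebra E (4 ≤ r, 3 ≤ n ≤ r+3), for any n−2 pairs of
diversity atoms u_i, v_i of C_E(A) the meet of the products u_i;v_i is nonzero;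
moreover if each product is neither 0' nor 1, then there is a function f with
u_i + v_i ≤ J(a_{f(i)}, 0), and if an index j ∈ {1,…,r−1} is missed by f then
J(a_j, 0) ≤ u_i;v_i for all i. -/
theorem stmt19 {α : Type} [RA α] (r n : ℕ) (hr : 4 ≤ r)
    (hnr : n ≤ r + 3)
    (e : Fin (r + 3) → α) (hE23 : NA.IsE23 (r + 3) e)
    (aa : Fin r → α)
    (h0 : aa ⟨0, by omega⟩ = (NA.ide : α))
    (h1 : aa ⟨1, by omega⟩ = e ⟨1, by omega⟩ ⊔ e ⟨2, by omega⟩)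
    (h2 : aa ⟨2, by omega⟩ = e ⟨3, by omega⟩ ⊔ e ⟨4, by omega⟩)
    (h3 : aa ⟨3, by omega⟩ = e ⟨5, by omega⟩ ⊔ e ⟨6, by omega⟩)
    (hrest : ∀ i : Fin r, 4 ≤ (i : ℕ) →
      aa i = e ⟨(i : ℕ) + 3, Nat.add_lt_add_right i.isLt 3⟩)
    (cov : α → α)
    (hcov : ∀ x : α, NA.DivAtom x → ∃ i : Fin r, cov x = aa i ∧ x ≤ aa i)
    (u v : Fin (n - 2) → NA.DAt α × ℕ) :
    (⋂ i : Fin (n - 2),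
      NA.Ccomp cov {(some (u i) : NA.CAtom α)} {some (v i)}).Nonempty ∧
    ((∀ i : Fin (n - 2),
        NA.Ccomp cov {(some (u i) : NA.CAtom α)} {some (v i)} ≠
          ({none} : Set (NA.CAtom α))ᶜ ∧
        NA.Ccomp cov {(some (u i) : NA.CAtom α)} {some (v i)} ≠ Set.univ) →
      ∃ f : Fin (n - 2) → Fin r,
        (∀ i : Fin (n - 2), f i ≠ ⟨0, by omega⟩ ∧
          (u i).1.1 ≤ aa (f i) ∧ (v i).1.1 ≤ aa (f i)) ∧
        ∀ j : Fin r, j ≠ ⟨0, by omega⟩ → (∀ i : Fin (n - 2), f i ≠ j) →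
          ∀ i : Fin (n - 2),
            NA.Jel (aa j) 0 ⊆
              NA.Ccomp cov {(some (u i) : NA.CAtom α)} {some (v i)}) := by
  classical
  have hsplit := NA.exists_eq_sup_coverIndex hr e (hE23.2.2.2.1 _ rfl) aa h0 h1 h2 h3 hrest
  have hinj : Injective e := hE23.2.2.1
  have hatom : ∀ s, IsAtom (e s) := hE23.2.2.2.2.1
  have hdisj := NA.pairwise_disjoint_of_eq_sup hatom hinj (NA.coverIndex ∘ Fin.val)
    Fin.val_injective fun j => by simpa using hsplit j
  have hpair j : ∃ a b : α, IsAtom a ∧ IsAtom b ∧ aa j = a ⊔ b :=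
    let ⟨p, q, h, _⟩ := hsplit j; ⟨e p, e q, hatom p, hatom q, h⟩
  let S : Finset (NA.DAt α) := univ.image fun s : Fin (r + 2) =>
    ⟨e s.succ, hE23.divAtom (Nat.succ_ne_zero _)⟩
  have hS : n - 2 < #S := by
    rw [card_image_of_injective _ fun s t h =>
      Fin.succ_injective _ (hinj (congrArg Subtype.val h)), card_univ, Fintype.card_fin]
    omega
  exact ⟨NA.iInter_Ccomp_nonempty hE23.le_comp (NA.eq_or_eq_or_eq_of_cov_eq hcov hpair) S hS u v,
    fun h => NA.exists_cover_index hdisj hcov hE23.le_comp h0 hE23.2.1.ne_bot u v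
      fun i => (h i).1⟩
end
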